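/- arXiv:2502.00995 — 2 statements merged into one kernel-verified Lean document; each statement's English description precedes it below -/
import Mathlib

section
/- Let C be a small C*-category. The quotient space B^C of [C;ℂ] by the gauge-equivalence relation ∼, equipped with the quotient topology, is a compact Hausdorff space, and the quotient map [C;ℂ] → B^C is both an open map and a closed map. -/
universe u v

/-- A small C*-category: objects `O`, hom-spaces `Hom A B` (the morphisms `C_{AB} = Hom(B,A)`),
each a complex Banach space, with bilinear submultiplicative composition and a conjugate-linear
involution satisfying the C*-identity and positivity of `x* ∘ x`. -/
class CStarCategory (O : Type u) (Hom : O → O → Type v)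
    [∀ A B, NormedAddCommGroup (Hom A B)]
    [∀ A B, NormedSpace ℂ (Hom A B)] where
  comp : ∀ {A B C : O}, Hom A B → Hom B C → Hom A C
  ident : ∀ A : O, Hom A A
  star : ∀ {A B : O}, Hom A B → Hom B A
  complete : ∀ A B : O, CompleteSpace (Hom A B)
  comp_assoc : ∀ {A B C D : O} (x : Hom A B) (y : Hom B C) (z : Hom C D),
    comp (comp x y) z = comp x (comp y z)
  ident_comp : ∀ {A B : O} (x : Hom A B), comp (ident A) x = x
  comp_ident : ∀ {A B : O} (x : Hom A B), comp x (ident B) = x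
  add_comp : ∀ {A B C : O} (x x' : Hom A B) (y : Hom B C),
    comp (x + x') y = comp x y + comp x' y
  comp_add : ∀ {A B C : O} (x : Hom A B) (y y' : Hom B C),
    comp x (y + y') = comp x y + comp x y'
  smul_comp : ∀ {A B C : O} (c : ℂ) (x : Hom A B) (y : Hom B C),
    comp (c • x) y = c • comp x y
  comp_smul : ∀ {A B C : O} (c : ℂ) (x : Hom A B) (y : Hom B C),
    comp x (c • y) = c • comp x y
  norm_comp_le : ∀ {A B C : O} (x : Hom A B) (y : Hom B C), ‖comp x y‖ ≤ ‖x‖ * ‖y‖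
  star_star : ∀ {A B : O} (x : Hom A B), star (star x) = x
  star_add : ∀ {A B : O} (x y : Hom A B), star (x + y) = star x + star y
  star_smul : ∀ {A B : O} (c : ℂ) (x : Hom A B),
    star (c • x) = (starRingEnd ℂ c) • star x
  star_comp : ∀ {A B C : O} (x : Hom A B) (y : Hom B C),
    star (comp x y) = comp (star y) (star x)
  star_ident : ∀ A : O, star (ident A) = ident A
  norm_star_comp_self : ∀ {A B : O} (x : Hom A B), ‖comp (star x) x‖ = ‖x‖ ^ 2
  star_comp_self_positive : ∀ {A B : O} (x : Hom A B),
    ∃ b : Hom B B, star b = b ∧ comp (star x) x = comp b b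

/-- A `*`-functor from a small C*-category to `ℂ`: ℂ-linear on every hom-space,
multiplicative on composition, unital on identities and compatible with the involutions. -/
structure StarFunctor (O : Type u) (Hom : O → O → Type v)
    [∀ A B, NormedAddCommGroup (Hom A B)] [∀ A B, NormedSpace ℂ (Hom A B)]
    [CStarCategory O Hom] where
  toFun : ∀ {A B : O}, Hom A B → ℂ
  map_add : ∀ {A B : O} (x y : Hom A B), toFun (x + y) = toFun x + toFun y
  map_smul : ∀ {A B : O} (c : ℂ) (x : Hom A B), toFun (c • x) = c * toFun x
  map_comp : ∀ {A B C : O} (x : Hom A B) (y : Hom B C),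
    toFun (CStarCategory.comp x y) = toFun x * toFun y
  map_ident : ∀ A : O, toFun (CStarCategory.ident A) = 1
  map_star : ∀ {A B : O} (x : Hom A B),
    toFun (CStarCategory.star x) = starRingEnd ℂ (toFun x)

/-- A C*-category is commutative if all diagonal hom-sets are commutative C*-algebras. -/
def CStarCategory.IsCommutative (O : Type u) (Hom : O → O → Type v)
    [∀ A B, NormedAddCommGroup (Hom A B)] [∀ A B, NormedSpace ℂ (Hom A B)]
    [CStarCategory O Hom] : Prop :=
  ∀ (A : O) (x y : Hom A A), CStarCategory.comp x y = CStarCategory.comp y x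

variable {O : Type u} {Hom : O → O → Type v}
    [∀ A B, NormedAddCommGroup (Hom A B)] [∀ A B, NormedSpace ℂ (Hom A B)]
    [CStarCategory O Hom]

/-- The weak-*-topology on the space `[C;ℂ]` of `*`-functors: the initial topology induced by
all evaluation maps `ev_x : ω ↦ ω(x)`. -/
noncomputable instance StarFunctor.instTopologicalSpace : TopologicalSpace (StarFunctor O Hom) :=
  TopologicalSpace.induced
    (fun ω => fun (A B : O) (x : Hom A B) => ω.toFun x) inferInstance

/-- Gauge equivalence of `*`-functors: `ω₁ ∼ ω₂` iff `ω₂ = α·ω₁` for some gauge cocycle `α`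
on the object set (a family of unimodular complex numbers with `α(A,B)·α(B,C) = α(A,C)`). -/
def gaugeEquiv (ω₁ ω₂ : StarFunctor O Hom) : Prop :=
  ∃ α : O → O → ℂ, (∀ A B : O, ‖α A B‖ = 1) ∧
    (∀ A B C : O, α A B * α B C = α A C) ∧
    ∀ (A B : O) (x : Hom A B), ω₂.toFun x = α A B * ω₁.toFun x


/-!
On each endomorphism space `Hom B B`, a `*`-functor `ω` is a character of a unital Banach algebra,
so `|ω a| ≤ ‖a‖` (otherwise `1 - a / ω a` would be a unit killed by `ω`); the C*-identity
`‖x* x‖ = ‖x‖²` extends the bound to every hom-space. Hence `[C;ℂ]` is a closed subset of a product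
of closed discs, so compact Hausdorff. Gauge equivalence is the orbit relation of the continuous
action of the group of `𝕋`-valued cocycles, which is compact as a closed subgroup of a product of
circles. A continuous action of a compact group on a Hausdorff space is proper, and the quotient
map of any continuous group action is open, so the quotient is Hausdorff; the quotient map of a
compact group action is moreover closed, and the quotient is compact as a continuous image.
-/

open CStarCategory

section GaugeCocycles

variable (ι : Type*) (G : Type*) [CommGroup G]

def gaugeCocycles : Subgroup (ι → ι → G) where
  carrier := {α | ∀ A B C, α A B * α B C = α A C}
  mul_mem' {α β} hα hβ A B C := by
    simp only [Pi.mul_apply, ← hα A B C, ← hβ A B C]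
    ac_rfl
  one_mem' _ _ _ := mul_one 1
  inv_mem' {α} hα A B C := by
    simp only [Pi.inv_apply, ← hα A B C, mul_inv]

variable {ι G}

lemma gaugeCocycles.apply_self {α : ι → ι → G} (hα : α ∈ gaugeCocycles ι G) (A : ι) :
    α A A = 1 :=
  mul_eq_left.1 (hα A A A)

lemma gaugeCocycles.apply_swap {α : ι → ι → G} (hα : α ∈ gaugeCocycles ι G) (A B : ι) :
    α B A = (α A B)⁻¹ :=
  eq_inv_of_mul_eq_one_right (by rw [hα A B A, gaugeCocycles.apply_self hα])

lemma gaugeCocycles.isClosed [TopologicalSpace G] [ContinuousMul G] [T2Space G] :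
    IsClosed (gaugeCocycles ι G : Set (ι → ι → G)) := by
  simp only [gaugeCocycles, Subgroup.coe_set_mk, Submonoid.coe_set_mk, Subsemigroup.coe_set_mk,
    Set.ofPred_forall]
  exact isClosed_iInter fun A => isClosed_iInter fun B => isClosed_iInter fun C =>
    isClosed_eq (by fun_prop) (by fun_prop)

instance [TopologicalSpace G] [CompactSpace G] [ContinuousMul G] [T2Space G] :
    CompactSpace (gaugeCocycles ι G) :=
  isCompact_iff_compactSpace.1 gaugeCocycles.isClosed.isCompact

end GaugeCocycles

theorem properSMul_of_compactSpace {G X : Type*} [Group G] [MulAction G X] [TopologicalSpace G]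
    [TopologicalSpace X] [CompactSpace G] [T2Space X] [ContinuousSMul G X] : ProperSMul G X :=
  properSMul_iff_continuousSMul_ultrafilter_tendsto_t2.2 ⟨inferInstance, fun 𝒰 _ _ _ => by
    obtain ⟨g, -, hg⟩ := isCompact_univ.ultrafilter_le_nhds (𝒰.map Prod.fst) (by simp)
    exact ⟨g, hg⟩⟩

namespace CStarCategory

abbrev endNormedRing (B : O) : NormedRing (Hom B B) :=
  { (inferInstance : NormedAddCommGroup (Hom B B)) with
    mul := comp
    one := ident B
    mul_assoc := comp_assoc
    one_mul := ident_comp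
    mul_one := comp_ident
    left_distrib := comp_add
    right_distrib := add_comp
    zero_mul := fun y => (by simpa using smul_comp (0 : ℂ) 0 y : comp 0 y = 0)
    mul_zero := fun x => (by simpa using comp_smul (0 : ℂ) x 0 : comp x 0 = 0)
    norm_mul_le := norm_comp_le }

end CStarCategory

namespace StarFunctor

@[ext]
lemma ext {ω ω' : StarFunctor O Hom} (h : ∀ (A B : O) (x : Hom A B), ω.toFun x = ω'.toFun x) :
    ω = ω' := by
  cases ω; cases ω'
  congr
  funext A B x
  exact h A B x

def toLinearMap (ω : StarFunctor O Hom) (A B : O) : Hom A B →ₗ[ℂ] ℂ where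
  toFun := ω.toFun
  map_add' := ω.map_add
  map_smul' := ω.map_smul

lemma norm_apply_le_of_endo (ω : StarFunctor O Hom) {B : O} (a : Hom B B) :
    ‖ω.toFun a‖ ≤ ‖a‖ := by
  let := endNormedRing (Hom := Hom) B
  have := complete (Hom := Hom) B B
  by_contra! h
  have hωa : ω.toFun a ≠ 0 := norm_pos_iff.1 ((norm_nonneg a).trans_lt h)
  set u := (ω.toFun a)⁻¹ • a
  have hu : ‖u‖ < 1 := by
    rwa [norm_smul, norm_inv, inv_mul_lt_one₀ (norm_pos_iff.2 hωa)]
  have hωu : ω.toFun (1 - u) = 0 := by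
    have : ω.toFun (1 - u) = ω.toFun (ident B) - (ω.toFun a)⁻¹ * ω.toFun a :=
      (map_sub (ω.toLinearMap B B) 1 u).trans (congrArg _ (ω.map_smul _ a))
    rw [this, ω.map_ident, inv_mul_cancel₀ hωa, sub_self]
  have hunit : ω.toFun (1 - u) * ω.toFun (↑(Units.oneSub u hu)⁻¹ : Hom B B) = 1 := by
    rw [← ω.map_comp]
    exact (congrArg ω.toFun (Units.oneSub u hu).mul_inv).trans (ω.map_ident B)
  simp [hωu] at hunit

lemma norm_apply_le (ω : StarFunctor O Hom) {A B : O} (x : Hom A B) : ‖ω.toFun x‖ ≤ ‖x‖ := by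
  have h := ω.norm_apply_le_of_endo (comp (star x) x)
  rw [ω.map_comp, ω.map_star, norm_mul, RCLike.norm_conj, norm_star_comp_self] at h
  exact le_of_pow_le_pow_left₀ two_ne_zero (norm_nonneg x) ((sq _).trans_le h)

def toPi (ω : StarFunctor O Hom) : ∀ A B : O, Hom A B → ℂ := fun _ _ x => ω.toFun x

lemma isEmbedding_toPi : Topology.IsEmbedding (toPi (O := O) (Hom := Hom)) :=
  ⟨⟨rfl⟩, fun _ _ h => ext fun A B x => congrFun (congrFun (congrFun h A) B) x⟩

lemma continuous_toFun {A B : O} (x : Hom A B) :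
    Continuous fun ω : StarFunctor O Hom => ω.toFun x :=
  (continuous_apply x).comp <| (continuous_apply B).comp <|
    (continuous_apply A).comp isEmbedding_toPi.continuous

lemma range_toPi : Set.range (toPi (O := O) (Hom := Hom)) =
    {f | (∀ A B (x y : Hom A B), f A B (x + y) = f A B x + f A B y) ∧
      (∀ A B (c : ℂ) (x : Hom A B), f A B (c • x) = c * f A B x) ∧
      (∀ A B C (x : Hom A B) (y : Hom B C), f A C (comp x y) = f A B x * f B C y) ∧
      (∀ A, f A A (ident A) = 1) ∧
      (∀ A B (x : Hom A B), f B A (star x) = starRingEnd ℂ (f A B x))} := by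
  ext f
  constructor
  · rintro ⟨ω, rfl⟩
    exact ⟨fun _ _ => ω.map_add, fun _ _ => ω.map_smul, fun _ _ _ => ω.map_comp, ω.map_ident,
      fun _ _ => ω.map_star⟩
  · rintro ⟨hadd, hsmul, hcomp, hident, hstar⟩
    exact ⟨⟨fun x => f _ _ x, hadd _ _, hsmul _ _, hcomp _ _ _, hident, hstar _ _⟩, rfl⟩

lemma isClosed_range_toPi : IsClosed (Set.range (toPi (O := O) (Hom := Hom))) := by
  simp only [range_toPi, Set.ofPred_and, Set.ofPred_forall]
  repeat' apply IsClosed.inter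
  all_goals repeat' apply isClosed_iInter; intro
  all_goals exact isClosed_eq (by fun_prop) (by fun_prop)

instance : CompactSpace (StarFunctor O Hom) := by
  refine ⟨isEmbedding_toPi.isCompact_iff.2 ?_⟩
  rw [Set.image_univ]
  refine (isCompact_univ_pi fun A => isCompact_univ_pi fun B => isCompact_univ_pi fun x =>
      isCompact_closedBall (0 : ℂ) ‖x‖).of_isClosed_subset isClosed_range_toPi ?_
  rintro _ ⟨ω, rfl⟩ A - B - x -
  simpa [toPi] using ω.norm_apply_le x

instance : T2Space (StarFunctor O Hom) := isEmbedding_toPi.t2Space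

instance : SMul (gaugeCocycles O Circle) (StarFunctor O Hom) where
  smul α ω :=
    { toFun := fun {A B} x => (α.1 A B : ℂ) * ω.toFun x
      map_add := fun x y => by rw [ω.map_add, mul_add]
      map_smul := fun c x => by rw [ω.map_smul, mul_left_comm]
      map_comp := fun {A B C} x y => by
        rw [ω.map_comp, ← α.2 A B C, Circle.coe_mul]
        ring
      map_ident := fun A => by
        rw [ω.map_ident, gaugeCocycles.apply_self α.2, Circle.coe_one, mul_one]
      map_star := fun {A B} x => by
        rw [ω.map_star, gaugeCocycles.apply_swap α.2, Circle.coe_inv_eq_conj, map_mul] }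

@[simp]
lemma smul_apply (α : gaugeCocycles O Circle) (ω : StarFunctor O Hom) {A B : O} (x : Hom A B) :
    (α • ω).toFun x = α.1 A B * ω.toFun x :=
  rfl

instance : MulAction (gaugeCocycles O Circle) (StarFunctor O Hom) where
  one_smul ω := by ext; simp
  mul_smul α β ω := by ext; simp [mul_assoc]

instance : ContinuousSMul (gaugeCocycles O Circle) (StarFunctor O Hom) where
  continuous_smul := by
    refine continuous_induced_rng.2 (continuous_pi fun A => continuous_pi fun B =>
      continuous_pi fun x => ?_)
    change Continuous fun p : gaugeCocycles O Circle × StarFunctor O Hom =>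
      (p.1.1 A B : ℂ) * p.2.toFun x
    exact (continuous_subtype_val.comp <| (continuous_apply B).comp <|
      (continuous_apply A).comp <| continuous_subtype_val.comp continuous_fst).mul
        ((continuous_toFun x).comp continuous_snd)

end StarFunctor

lemma gaugeEquiv_iff {ω₁ ω₂ : StarFunctor O Hom} :
    gaugeEquiv ω₁ ω₂ ↔ ∃ α : gaugeCocycles O Circle, α • ω₁ = ω₂ := by
  constructor
  · rintro ⟨α, hnorm, hcocycle, hα⟩
    let α' : O → O → Circle := fun A B => ⟨α A B, mem_sphere_zero_iff_norm.2 (hnorm A B)⟩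
    exact ⟨⟨α', fun A B C => Circle.ext (hcocycle A B C)⟩,
      StarFunctor.ext fun A B x => (hα A B x).symm⟩
  · rintro ⟨α, rfl⟩
    exact ⟨fun A B => α.1 A B, fun A B => Circle.norm_coe _,
      fun A B C => congrArg Subtype.val (α.2 A B C), fun A B x => rfl⟩

lemma gaugeEquiv_eq_orbitRel :
    gaugeEquiv (O := O) (Hom := Hom) =
      (MulAction.orbitRel (gaugeCocycles O Circle) (StarFunctor O Hom)).r := by
  ext ω₁ ω₂
  rw [gaugeEquiv_iff, Setoid.comm', MulAction.orbitRel_apply]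
  rfl

/-- The quotient space `B^C` of `[C;ℂ]` by gauge equivalence, with the
quotient topology, is compact Hausdorff, and the quotient map is both open and closed. -/
theorem gaugeQuotient_compact_t2_open_closed :
    CompactSpace (Quot (gaugeEquiv (O := O) (Hom := Hom))) ∧
    T2Space (Quot (gaugeEquiv (O := O) (Hom := Hom))) ∧
    IsOpenMap (Quot.mk (gaugeEquiv (O := O) (Hom := Hom))) ∧
    IsClosedMap (Quot.mk (gaugeEquiv (O := O) (Hom := Hom))) := by
  have := properSMul_of_compactSpace (G := gaugeCocycles O Circle) (X := StarFunctor O Hom)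
  rw [gaugeEquiv_eq_orbitRel]
  exact ⟨inferInstance, t2Space_quotient_mulAction_of_properSMul, isOpenMap_quotient_mk'_mul,
    MulAction.isClosedMap_quotient⟩
end

section
/- Let C be a small commutative C*-category, let A, B, D be objects of C, and let ω, ρ ∈ [C;ℂ] satisfy ω(b) = ρ(b) for all b ∈ C_{BB}, with ω not identically zero on C_{AB} and ρ not identically zero on C_{BD}. Then there exist σ ∈ [C;ℂ] and unimodular complex numbers u, v such that σ(x) = u·ω(x) for all x ∈ C_{AB} and σ(y) = v·ρ(y) for all y ∈ C_{BD}, and moreover σ is not identically zero on C_{AD}. Furthermore, for any two such σ, σ′ there exists a unimodular complex number w with σ′(z) = w·σ(z) for all z ∈ C_{AD}. -/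
universe u v

variable {O : Type u} {Hom : O → O → Type v}
    [∀ A B, NormedAddCommGroup (Hom A B)] [∀ A B, NormedSpace ℂ (Hom A B)]
    [CStarCategory O Hom]

/-- `σ` interpolates `ω` on `C_{AB}` and `ρ` on `C_{BD}` up to unimodular phases. -/
def StarFunctor.Interpolates (O : Type u) (Hom : O → O → Type v)
    [∀ A B, NormedAddCommGroup (Hom A B)] [∀ A B, NormedSpace ℂ (Hom A B)]
    [CStarCategory O Hom] (A B D : O) (ω ρ σ : StarFunctor O Hom) : Prop :=
  ∃ u v : ℂ, ‖u‖ = 1 ∧ ‖v‖ = 1 ∧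
    (∀ x : Hom A B, σ.toFun x = u * ω.toFun x) ∧
    (∀ y : Hom B D, σ.toFun y = v * ρ.toFun y)

/-!
Since `ω` and `ρ` agree on `C_{BB}`, evaluating both on `y ∘ y'*` for `y, y' ∈ C_{BD}` gives
`ω(y) conj ω(y') = ρ(y) conj ρ(y')`, which forces `ω = v ρ` on `C_{BD}` for a phase `v`; so `ω`
itself interpolates. Conversely, for a fixed `x₀ ∈ C_{AB}` with `ω(x₀) ≠ 0`, any interpolating `σ`
satisfies `σ(x₀* ∘ z) = conj σ(x₀) · σ(z)`, which determines `σ` on `C_{AD}` up to a phase.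
-/

open CStarCategory ComplexConjugate

theorem Complex.exists_norm_eq_one_eq_mul_of_mul_conj_eq {X : Type*} {f g : X → ℂ}
    (hfg : ∀ y y', f y * conj (f y') = g y * conj (g y')) {y₀ : X} (hy₀ : g y₀ ≠ 0) :
    ∃ v : ℂ, ‖v‖ = 1 ∧ ∀ y, f y = v * g y := by
  have hnorm : ‖f y₀‖ = ‖g y₀‖ := by
    have h := hfg y₀ y₀
    rw [Complex.mul_conj', Complex.mul_conj'] at h
    exact (pow_left_inj₀ (norm_nonneg _) (norm_nonneg _) two_ne_zero).mp (by exact_mod_cast h)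
  have hf₀ : f y₀ ≠ 0 := norm_ne_zero_iff.mp (hnorm ▸ norm_ne_zero_iff.mpr hy₀)
  refine ⟨conj (g y₀) / conj (f y₀), ?_, fun y => ?_⟩
  · rw [norm_div, Complex.norm_conj, Complex.norm_conj, hnorm, div_self (norm_ne_zero_iff.mpr hy₀)]
  · rw [div_mul_eq_mul_div, eq_div_iff ((map_ne_zero _).mpr hf₀), hfg y y₀, mul_comm]

namespace StarFunctor

theorem map_comp_star (σ : StarFunctor O Hom) {A B C : O} (x : Hom A B) (y : Hom C B) :
    σ.toFun (comp x (star y)) = σ.toFun x * conj (σ.toFun y) := by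
  rw [σ.map_comp, σ.map_star]

theorem map_star_comp (σ : StarFunctor O Hom) {A B C : O} (x : Hom A B) (z : Hom A C) :
    σ.toFun (comp (star x) z) = conj (σ.toFun x) * σ.toFun z := by
  rw [σ.map_comp, σ.map_star]

theorem exists_norm_eq_one_eq_mul_of_eq_on_end (ω ρ : StarFunctor O Hom) {B D : O}
    (h : ∀ b : Hom B B, ω.toFun b = ρ.toFun b) {y₀ : Hom B D} (hy₀ : ρ.toFun y₀ ≠ 0) :
    ∃ v : ℂ, ‖v‖ = 1 ∧ ∀ y : Hom B D, ω.toFun y = v * ρ.toFun y :=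
  Complex.exists_norm_eq_one_eq_mul_of_mul_conj_eq
    (fun y y' => by simpa only [map_comp_star] using h (comp y (star y'))) hy₀

theorem Interpolates.exists_norm_eq_one_eq_mul {A B D : O} {ω ρ σ : StarFunctor O Hom}
    (hσ : Interpolates O Hom A B D ω ρ σ) {x₀ : Hom A B} (hx₀ : ω.toFun x₀ ≠ 0) :
    ∃ t : ℂ, ‖t‖ = 1 ∧
      ∀ z : Hom A D, σ.toFun z = t * (ρ.toFun (comp (star x₀) z) / conj (ω.toFun x₀)) := by
  obtain ⟨u, v, hu, hv, hAB, hBD⟩ := hσ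
  refine ⟨u * v, by rw [norm_mul, hu, hv, one_mul], fun z => ?_⟩
  have hz := hBD (comp (star x₀) z)
  rw [map_star_comp, hAB, map_mul] at hz
  have hu' : u * conj u = 1 := by rw [Complex.mul_conj', hu]; norm_num
  rw [mul_div_assoc', eq_div_iff ((map_ne_zero _).mpr hx₀)]
  linear_combination (-conj (ω.toFun x₀) * σ.toFun z) * hu' + u * hz

end StarFunctor

theorem StarFunctor.exists_interpolating_starFunctor_general
    (A B D : O)
    (ω ρ : StarFunctor O Hom)
    (h : ∀ b : Hom B B, ω.toFun b = ρ.toFun b)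
    (hω : ∃ x : Hom A B, ω.toFun x ≠ 0) (hρ : ∃ y : Hom B D, ρ.toFun y ≠ 0) :
    (∃ σ : StarFunctor O Hom, StarFunctor.Interpolates O Hom A B D ω ρ σ ∧
      ∃ z : Hom A D, σ.toFun z ≠ 0) ∧
    (∀ σ σ' : StarFunctor O Hom, StarFunctor.Interpolates O Hom A B D ω ρ σ →
      StarFunctor.Interpolates O Hom A B D ω ρ σ' →
      ∃ w : ℂ, ‖w‖ = 1 ∧ ∀ z : Hom A D, σ'.toFun z = w * σ.toFun z) := by
  obtain ⟨x₀, hx₀⟩ := hω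
  obtain ⟨y₀, hy₀⟩ := hρ
  obtain ⟨v, hv, hωρ⟩ := ω.exists_norm_eq_one_eq_mul_of_eq_on_end ρ h hy₀
  have hv₀ : v ≠ 0 := norm_ne_zero_iff.mp (hv ▸ one_ne_zero)
  refine ⟨⟨ω, ⟨1, v, norm_one, hv, fun x => (one_mul _).symm, hωρ⟩, comp x₀ y₀, ?_⟩, ?_⟩
  · rw [ω.map_comp, hωρ]
    exact mul_ne_zero hx₀ (mul_ne_zero hv₀ hy₀)
  · intro σ σ' hσ hσ'
    obtain ⟨t, ht, hσt⟩ := hσ.exists_norm_eq_one_eq_mul hx₀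
    obtain ⟨t', ht', hσt'⟩ := hσ'.exists_norm_eq_one_eq_mul hx₀
    have ht₀ : t ≠ 0 := norm_ne_zero_iff.mp (ht ▸ one_ne_zero)
    refine ⟨t' / t, by rw [norm_div, ht, ht', div_one], fun z => ?_⟩
    rw [hσt, hσt', ← mul_assoc, div_mul_cancel₀ _ ht₀]

/-- For `*`-functors `ω, ρ` on a small commutative C*-category agreeing on
`C_{BB}`, with `ω` nonvanishing on `C_{AB}` and `ρ` nonvanishing on `C_{BD}`, there exists a
`*`-functor `σ` agreeing with `ω` on `C_{AB}` and with `ρ` on `C_{BD}` up to unimodular phases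
and not identically zero on `C_{AD}`; moreover any two such `σ, σ′` differ on `C_{AD}` by a
unimodular phase. -/
theorem StarFunctor.exists_interpolating_starFunctor
    (hcomm : CStarCategory.IsCommutative O Hom) (A B D : O)
    (ω ρ : StarFunctor O Hom)
    (h : ∀ b : Hom B B, ω.toFun b = ρ.toFun b)
    (hω : ∃ x : Hom A B, ω.toFun x ≠ 0) (hρ : ∃ y : Hom B D, ρ.toFun y ≠ 0) :
    (∃ σ : StarFunctor O Hom, StarFunctor.Interpolates O Hom A B D ω ρ σ ∧
      ∃ z : Hom A D, σ.toFun z ≠ 0) ∧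
    (∀ σ σ' : StarFunctor O Hom, StarFunctor.Interpolates O Hom A B D ω ρ σ →
      StarFunctor.Interpolates O Hom A B D ω ρ σ' →
      ∃ w : ℂ, ‖w‖ = 1 ∧ ∀ z : Hom A D, σ'.toFun z = w * σ.toFun z) :=
  StarFunctor.exists_interpolating_starFunctor_general A B D ω ρ h hω hρ
end
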